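/- arXiv:2405.19369 — 3 statements merged into one kernel-verified Lean document; each statement's English description precedes it below -/
import Mathlib

section
/- Let κ be a Boolean Distance Function on the d-dimensional torus. Then there exists a subset S of [d] with |S| equal to the depth D(κ) of κ such that κ(x) ≤ max_{i∈S} |x_i|_T for all x in the torus, where |·|_T denotes the torus distance to 0 in one coordinate. -/
open MeasureTheory
open scoped ENNReal

/-- Syntax tree for Boolean Distance Functions on the `d`-dimensional torus:
leaves are single coordinates, inner nodes are max or min combinations. -/
inductive BDFTree (d : ℕ) : Type
  | leaf : Fin d → BDFTree d
  | bmax : BDFTree d → BDFTree d → BDFTree d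
  | bmin : BDFTree d → BDFTree d → BDFTree d

namespace BDFTree

variable {d : ℕ}

/-- The set of coordinates appearing in the tree. -/
def leafSet : BDFTree d → Finset (Fin d)
  | leaf i => {i}
  | bmax t₁ t₂ => t₁.leafSet ∪ t₂.leafSet
  | bmin t₁ t₂ => t₁.leafSet ∪ t₂.leafSet

/-- Each inner node splits its coordinates into two disjoint nonoverlapping parts. -/
def Proper : BDFTree d → Prop
  | leaf _ => True
  | bmax t₁ t₂ => Disjoint t₁.leafSet t₂.leafSet ∧ t₁.Proper ∧ t₂.Proper
  | bmin t₁ t₂ => Disjoint t₁.leafSet t₂.leafSet ∧ t₁.Proper ∧ t₂.Proper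

/-- `t` represents a Boolean Distance Function on `T^d`: every coordinate of `[d]`
is used exactly once. -/
def IsBDF (t : BDFTree d) : Prop := t.Proper ∧ t.leafSet = Finset.univ

/-- Evaluation of the Boolean Distance Function at a point of the torus
`T^d = (ℝ/ℤ)^d`; on a one-coordinate leaf it is the torus distance `|x_i|_T = ‖x i‖`. -/
noncomputable def eval : BDFTree d → (Fin d → AddCircle (1 : ℝ)) → ℝ
  | leaf i, x => ‖x i‖
  | bmax t₁ t₂, x => max (t₁.eval x) (t₂.eval x)
  | bmin t₁ t₂, x => min (t₁.eval x) (t₂.eval x)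

/-- The depth of a Boolean Distance Function. -/
def depth : BDFTree d → ℕ
  | leaf _ => 1
  | bmax t₁ t₂ => t₁.depth + t₂.depth
  | bmin t₁ t₂ => min t₁.depth t₂.depth

/-- Single-Coordinate Outer-Max Boolean Distance Functions. -/
def SCOM : BDFTree d → Prop
  | leaf _ => True
  | bmax t₁ t₂ => (∃ i, t₁ = leaf i) ∨ (∃ i, t₂ = leaf i)
  | bmin _ _ => False

/-- `V_κ(r)`: the Haar (Lebesgue) volume of the ball of radius `r` around `0`. -/
noncomputable def ballVol (t : BDFTree d) (r : ℝ) : ℝ≥0∞ :=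
  volume {x : Fin d → AddCircle (1 : ℝ) | t.eval x < r}

end BDFTree

theorem bdf_aux {d : ℕ} (t : BDFTree d) (ht : t.Proper) :
    ∃ (S : Finset (Fin d)) (hS : S.Nonempty), S ⊆ t.leafSet ∧ S.card = t.depth ∧
      ∀ x : Fin d → AddCircle (1 : ℝ), t.eval x ≤ S.sup' hS (fun i => ‖x i‖) := by
  induction t with
  | leaf i =>
    refine ⟨{i}, ⟨i, by simp⟩, by simp [BDFTree.leafSet], by simp [BDFTree.depth], ?_⟩
    intro x
    simp [BDFTree.eval]
  | bmax t₁ t₂ ih₁ ih₂ =>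
    obtain ⟨hdisj, hp₁, hp₂⟩ := ht
    obtain ⟨S₁, hS₁, hsub₁, hc₁, hb₁⟩ := ih₁ hp₁
    obtain ⟨S₂, hS₂, hsub₂, hc₂, hb₂⟩ := ih₂ hp₂
    have hdisjS : Disjoint S₁ S₂ :=
      Finset.disjoint_of_subset_left hsub₁ (Finset.disjoint_of_subset_right hsub₂ hdisj)
    refine ⟨S₁ ∪ S₂, hS₁.mono Finset.subset_union_left, ?_, ?_, ?_⟩
    · exact Finset.union_subset_union hsub₁ hsub₂
    · rw [Finset.card_union_of_disjoint hdisjS, hc₁, hc₂]; rfl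
    · intro x
      have h1 : S₁.sup' hS₁ (fun i => ‖x i‖) ≤
          (S₁ ∪ S₂).sup' (hS₁.mono Finset.subset_union_left) (fun i => ‖x i‖) :=
        Finset.sup'_le _ _ fun i hi =>
          Finset.le_sup' (fun i => ‖x i‖) (Finset.mem_union_left _ hi)
      have h2 : S₂.sup' hS₂ (fun i => ‖x i‖) ≤
          (S₁ ∪ S₂).sup' (hS₁.mono Finset.subset_union_left) (fun i => ‖x i‖) :=
        Finset.sup'_le _ _ fun i hi =>
          Finset.le_sup' (fun i => ‖x i‖) (Finset.mem_union_right _ hi)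
      exact max_le ((hb₁ x).trans h1) ((hb₂ x).trans h2)
  | bmin t₁ t₂ ih₁ ih₂ =>
    obtain ⟨hdisj, hp₁, hp₂⟩ := ht
    obtain ⟨S₁, hS₁, hsub₁, hc₁, hb₁⟩ := ih₁ hp₁
    obtain ⟨S₂, hS₂, hsub₂, hc₂, hb₂⟩ := ih₂ hp₂
    by_cases h : t₁.depth ≤ t₂.depth
    · refine ⟨S₁, hS₁, hsub₁.trans Finset.subset_union_left, ?_, ?_⟩
      · rw [hc₁]; exact (min_eq_left h).symm
      · intro x; exact (min_le_left _ _).trans (hb₁ x)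
    · refine ⟨S₂, hS₂, hsub₂.trans Finset.subset_union_right, ?_, ?_⟩
      · rw [hc₂]; exact (min_eq_right (le_of_not_ge h)).symm
      · intro x; exact (min_le_right _ _).trans (hb₂ x)

/-- Proposition: any BDF is bounded above by the max-norm over a subset of
coordinates of size exactly the depth. -/
theorem bdf_le_maxnorm_on_depth_subset {d : ℕ} (t : BDFTree d) (ht : t.IsBDF) :
    ∃ (S : Finset (Fin d)) (hS : S.Nonempty), S.card = t.depth ∧
      ∀ x : Fin d → AddCircle (1 : ℝ), t.eval x ≤ S.sup' hS (fun i => ‖x i‖) := by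
  obtain ⟨S, hS, _, hc, hb⟩ := bdf_aux t ht.1
  exact ⟨S, hS, hc, hb⟩
end

section
/- Let κ be a Boolean Distance Function on the d-dimensional torus with depth D(κ). Then the volume (Lebesgue measure) V_κ(r) of the ball {x ∈ T^d : κ(x) < r} satisfies V_κ(r) = Θ(r^{D(κ)}) as r → 0; i.e. there exist constants c, C > 0 and r0 > 0 such that c·r^{D(κ)} ≤ V_κ(r) ≤ C·r^{D(κ)} for all 0 < r ≤ r0. -/
open MeasureTheory
open scoped ENNReal

namespace BDFAux

instance : IsProbabilityMeasure (volume : Measure (AddCircle (1:ℝ))) := ⟨by simp⟩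

open BDFTree

variable {d : ℕ}

lemma continuous_eval (t : BDFTree d) : Continuous t.eval := by
  induction t with
  | leaf i => exact continuous_norm.comp (continuous_apply i)
  | bmax t₁ t₂ ih₁ ih₂ => exact ih₁.max ih₂
  | bmin t₁ t₂ ih₁ ih₂ => exact ih₁.min ih₂

lemma measurableSet_ball (t : BDFTree d) (r : ℝ) :
    MeasurableSet {x : Fin d → AddCircle (1:ℝ) | t.eval x < r} :=
  (isOpen_lt (continuous_eval t) continuous_const).measurableSet

lemma eval_congr (t : BDFTree d) {x y : Fin d → AddCircle (1:ℝ)}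
    (h : ∀ i ∈ t.leafSet, x i = y i) : t.eval x = t.eval y := by
  induction t with
  | leaf i => simp [eval, h i (by simp [leafSet])]
  | bmax t₁ t₂ ih₁ ih₂ =>
      simp only [eval]
      rw [ih₁ fun i hi => h i (by simp [leafSet, hi]),
        ih₂ fun i hi => h i (by simp [leafSet, hi])]
  | bmin t₁ t₂ ih₁ ih₂ =>
      simp only [eval]
      rw [ih₁ fun i hi => h i (by simp [leafSet, hi]),
        ih₂ fun i hi => h i (by simp [leafSet, hi])]

lemma indep_inter (S : Finset (Fin d)) {A B : Set (Fin d → AddCircle (1:ℝ))}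
    (hA : MeasurableSet A) (hB : MeasurableSet B)
    (hAS : ∀ x y : Fin d → AddCircle (1:ℝ), (∀ i ∈ S, x i = y i) → (x ∈ A ↔ y ∈ A))
    (hBS : ∀ x y : Fin d → AddCircle (1:ℝ), (∀ i ∉ S, x i = y i) → (x ∈ B ↔ y ∈ B)) :
    volume (A ∩ B) = volume A * volume B := by
  classical
  set p : Fin d → Prop := fun i => i ∈ S with hp
  let e := MeasurableEquiv.piEquivPiSubtypeProd (fun _ : Fin d => AddCircle (1:ℝ)) p
  have hmp := volume_preserving_piEquivPiSubtypeProd (fun _ : Fin d => AddCircle (1:ℝ)) p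
  let F : (∀ _ : {i // p i}, AddCircle (1:ℝ)) → (Fin d → AddCircle (1:ℝ)) :=
    fun u => e.symm (u, fun _ => 0)
  let G : (∀ _ : {i // ¬ p i}, AddCircle (1:ℝ)) → (Fin d → AddCircle (1:ℝ)) :=
    fun v => e.symm (fun _ => 0, v)
  have hFmeas : Measurable F :=
    e.symm.measurable.comp (measurable_id.prodMk measurable_const)
  have hGmeas : Measurable G :=
    e.symm.measurable.comp (measurable_const.prodMk measurable_id)
  have keyA : ∀ x : Fin d → AddCircle (1:ℝ), F ((e x).1) ∈ A ↔ x ∈ A := by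
    intro x
    apply hAS
    intro i hi
    show (if h : p i then (e x).1 ⟨i, h⟩ else (0 : AddCircle (1:ℝ))) = x i
    rw [dif_pos hi]
    congr!
  have keyB : ∀ x : Fin d → AddCircle (1:ℝ), G ((e x).2) ∈ B ↔ x ∈ B := by
    intro x
    apply hBS
    intro i hi
    show (if h : p i then (0 : AddCircle (1:ℝ)) else (e x).2 ⟨i, h⟩) = x i
    rw [dif_neg hi]
    congr!
  have hAeq : A = e ⁻¹' ((F ⁻¹' A) ×ˢ Set.univ) := by
    ext x
    simp only [Set.mem_preimage, Set.mem_prod, Set.mem_univ, and_true]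
    exact (keyA x).symm
  have hBeq : B = e ⁻¹' (Set.univ ×ˢ (G ⁻¹' B)) := by
    ext x
    simp only [Set.mem_preimage, Set.mem_prod, Set.mem_univ, true_and]
    exact (keyB x).symm
  have hABeq : A ∩ B = e ⁻¹' ((F ⁻¹' A) ×ˢ (G ⁻¹' B)) := by
    ext x
    simp only [Set.mem_inter_iff, Set.mem_preimage, Set.mem_prod]
    rw [keyA x, keyB x]
  have hA1 : MeasurableSet (F ⁻¹' A) := hFmeas hA
  have hB1 : MeasurableSet (G ⁻¹' B) := hGmeas hB
  have vAB : volume (A ∩ B) = volume (F ⁻¹' A) * volume (G ⁻¹' B) := by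
    rw [hABeq, hmp.measure_preimage (hA1.prod hB1).nullMeasurableSet, Measure.volume_eq_prod, Measure.prod_prod]
    congr!
  have vA : volume A = volume (F ⁻¹' A) := by
    conv_lhs => rw [hAeq]
    rw [hmp.measure_preimage (hA1.prod MeasurableSet.univ).nullMeasurableSet,
      Measure.volume_eq_prod, Measure.prod_prod, measure_univ, mul_one]
    congr!
  have vB : volume B = volume (G ⁻¹' B) := by
    conv_lhs => rw [hBeq]
    rw [hmp.measure_preimage (MeasurableSet.univ.prod hB1).nullMeasurableSet,
      Measure.volume_eq_prod, Measure.prod_prod, measure_univ, one_mul]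
  rw [vAB, vA, vB]

lemma leaf_vol (i : Fin d) {r : ℝ} (hr : 0 < r) (hr2 : r ≤ 1/2) :
    ENNReal.ofReal r ≤ (BDFTree.leaf i).ballVol r ∧
    (BDFTree.leaf i).ballVol r ≤ ENNReal.ofReal (2 * r) := by
  have hset : {x : Fin d → AddCircle (1:ℝ) | (BDFTree.leaf i).eval x < r} =
      Set.pi Set.univ (fun j => if j = i then Metric.ball (0 : AddCircle (1:ℝ)) r
        else Set.univ) := by
    ext x
    simp only [Set.mem_setOf_eq, Set.mem_pi, Set.mem_univ, true_implies, eval]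
    constructor
    · intro h j
      by_cases hj : j = i
      · subst hj; simp [mem_ball_zero_iff, h]
      · simp [hj]
    · intro h
      have := h i
      simpa [mem_ball_zero_iff] using this
  have hvol : (BDFTree.leaf i).ballVol r = volume (Metric.ball (0 : AddCircle (1:ℝ)) r) := by
    rw [ballVol, hset, volume_pi_pi]
    rw [Finset.prod_eq_single i (fun j _ hj => by simp [hj]) (by simp)]
    simp
  constructor
  · rw [hvol]
    have hsub : Metric.closedBall (0 : AddCircle (1:ℝ)) (r/2) ⊆ Metric.ball 0 r :=
      Metric.closedBall_subset_ball (by linarith)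
    calc ENNReal.ofReal r = volume (Metric.closedBall (0 : AddCircle (1:ℝ)) (r/2)) := by
          rw [AddCircle.volume_closedBall (T := 1)]
          congr 1
          rw [min_eq_right (by linarith)]
          ring
      _ ≤ _ := measure_mono hsub
  · rw [hvol]
    calc volume (Metric.ball (0 : AddCircle (1:ℝ)) r)
        ≤ volume (Metric.closedBall (0 : AddCircle (1:ℝ)) r) :=
          measure_mono Metric.ball_subset_closedBall
      _ = ENNReal.ofReal (min 1 (2 * r)) := AddCircle.volume_closedBall (T := 1) r
      _ ≤ ENNReal.ofReal (2 * r) := ENNReal.ofReal_le_ofReal (min_le_right _ _)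

lemma main (t : BDFTree d) (hp : t.Proper) :
    ∃ c C : ℝ, 0 < c ∧ 0 < C ∧ ∀ r : ℝ, 0 < r → r ≤ 1/2 →
      ENNReal.ofReal (c * r ^ t.depth) ≤ t.ballVol r ∧
      t.ballVol r ≤ ENNReal.ofReal (C * r ^ t.depth) := by
  induction t with
  | leaf i =>
      refine ⟨1, 2, one_pos, two_pos, fun r hr hr2 => ?_⟩
      have := leaf_vol i hr hr2
      simpa [depth] using this
  | bmax t₁ t₂ ih₁ ih₂ =>
      obtain ⟨hdisj, hp₁, hp₂⟩ := hp
      obtain ⟨c₁, C₁, hc₁, hC₁, h₁⟩ := ih₁ hp₁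
      obtain ⟨c₂, C₂, hc₂, hC₂, h₂⟩ := ih₂ hp₂
      refine ⟨c₁ * c₂, C₁ * C₂, mul_pos hc₁ hc₂, mul_pos hC₁ hC₂, fun r hr hr2 => ?_⟩
      obtain ⟨hl₁, hu₁⟩ := h₁ r hr hr2
      obtain ⟨hl₂, hu₂⟩ := h₂ r hr hr2
      have hsplit : (t₁.bmax t₂).ballVol r = t₁.ballVol r * t₂.ballVol r := by
        have : {x : Fin d → AddCircle (1:ℝ) | (t₁.bmax t₂).eval x < r} =
            {x | t₁.eval x < r} ∩ {x | t₂.eval x < r} := by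
          ext x; simp [eval, max_lt_iff]
        rw [ballVol, this]
        refine indep_inter t₁.leafSet (measurableSet_ball t₁ r) (measurableSet_ball t₂ r)
          ?_ ?_
        · intro x y hxy
          have : t₁.eval x = t₁.eval y := eval_congr t₁ hxy
          simp [Set.mem_setOf_eq, this]
        · intro x y hxy
          have : t₂.eval x = t₂.eval y :=
            eval_congr t₂ fun i hi => hxy i (fun hiS => absurd hi (Finset.disjoint_left.mp hdisj hiS))
          simp [Set.mem_setOf_eq, this]
      rw [hsplit]
      constructor
      · calc ENNReal.ofReal (c₁ * c₂ * r ^ (t₁.bmax t₂).depth)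
            = ENNReal.ofReal (c₁ * r ^ t₁.depth) * ENNReal.ofReal (c₂ * r ^ t₂.depth) := by
              rw [← ENNReal.ofReal_mul (by positivity)]
              congr 1
              simp only [depth]
              rw [pow_add]; ring
          _ ≤ t₁.ballVol r * t₂.ballVol r := mul_le_mul' hl₁ hl₂
      · calc t₁.ballVol r * t₂.ballVol r
            ≤ ENNReal.ofReal (C₁ * r ^ t₁.depth) * ENNReal.ofReal (C₂ * r ^ t₂.depth) :=
              mul_le_mul' hu₁ hu₂
          _ = ENNReal.ofReal (C₁ * C₂ * r ^ (t₁.bmax t₂).depth) := by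
              rw [← ENNReal.ofReal_mul (by positivity)]
              congr 1
              simp only [depth]
              rw [pow_add]; ring
  | bmin t₁ t₂ ih₁ ih₂ =>
      obtain ⟨hdisj, hp₁, hp₂⟩ := hp
      obtain ⟨c₁, C₁, hc₁, hC₁, h₁⟩ := ih₁ hp₁
      obtain ⟨c₂, C₂, hc₂, hC₂, h₂⟩ := ih₂ hp₂
      refine ⟨min c₁ c₂, C₁ + C₂, lt_min hc₁ hc₂, by positivity, fun r hr hr2 => ?_⟩
      obtain ⟨hl₁, hu₁⟩ := h₁ r hr hr2
      obtain ⟨hl₂, hu₂⟩ := h₂ r hr hr2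
      have hr1 : r ≤ 1 := by linarith
      have hunion : {x : Fin d → AddCircle (1:ℝ) | (t₁.bmin t₂).eval x < r} =
          {x | t₁.eval x < r} ∪ {x | t₂.eval x < r} := by
        ext x; simp [eval, min_lt_iff]
      have hdep : (t₁.bmin t₂).depth = min t₁.depth t₂.depth := rfl
      constructor
      · rcases le_total t₁.depth t₂.depth with hle | hle
        · calc ENNReal.ofReal (min c₁ c₂ * r ^ (t₁.bmin t₂).depth)
              ≤ ENNReal.ofReal (c₁ * r ^ t₁.depth) := by
                apply ENNReal.ofReal_le_ofReal
                rw [hdep, min_eq_left hle]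
                exact mul_le_mul_of_nonneg_right (min_le_left _ _) (by positivity)
            _ ≤ t₁.ballVol r := hl₁
            _ ≤ (t₁.bmin t₂).ballVol r := by
                rw [ballVol, ballVol, hunion]
                exact measure_mono Set.subset_union_left
        · calc ENNReal.ofReal (min c₁ c₂ * r ^ (t₁.bmin t₂).depth)
              ≤ ENNReal.ofReal (c₂ * r ^ t₂.depth) := by
                apply ENNReal.ofReal_le_ofReal
                rw [hdep, min_eq_right hle]
                exact mul_le_mul_of_nonneg_right (min_le_right _ _) (by positivity)
            _ ≤ t₂.ballVol r := hl₂
            _ ≤ (t₁.bmin t₂).ballVol r := by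
                rw [ballVol, ballVol, hunion]
                exact measure_mono Set.subset_union_right
      · have hpow : ∀ n : ℕ, min t₁.depth t₂.depth ≤ n → r ^ n ≤ r ^ min t₁.depth t₂.depth :=
          fun n hn => pow_le_pow_of_le_one hr.le hr1 hn
        calc (t₁.bmin t₂).ballVol r
            ≤ t₁.ballVol r + t₂.ballVol r := by
              rw [ballVol, hunion]
              exact measure_union_le _ _
          _ ≤ ENNReal.ofReal (C₁ * r ^ t₁.depth) + ENNReal.ofReal (C₂ * r ^ t₂.depth) :=
              add_le_add hu₁ hu₂
          _ = ENNReal.ofReal (C₁ * r ^ t₁.depth + C₂ * r ^ t₂.depth) := by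
              rw [ENNReal.ofReal_add (by positivity) (by positivity)]
          _ ≤ ENNReal.ofReal ((C₁ + C₂) * r ^ (t₁.bmin t₂).depth) := by
              apply ENNReal.ofReal_le_ofReal
              rw [hdep, add_mul]
              exact add_le_add
                (mul_le_mul_of_nonneg_left (hpow _ (min_le_left _ _)) hC₁.le)
                (mul_le_mul_of_nonneg_left (hpow _ (min_le_right _ _)) hC₂.le)

end BDFAux

/-- Proposition: `V_κ(r) = Θ(r^{D(κ)})` as `r → 0`. -/
theorem ballVol_isTheta_rpow_depth {d : ℕ} (t : BDFTree d) (ht : t.IsBDF) :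
    ∃ c C r0 : ℝ, 0 < c ∧ 0 < C ∧ 0 < r0 ∧
      ∀ r : ℝ, 0 < r → r ≤ r0 →
        ENNReal.ofReal (c * r ^ t.depth) ≤ t.ballVol r ∧
        t.ballVol r ≤ ENNReal.ofReal (C * r ^ t.depth) := by
  obtain ⟨c, C, hc, hC, h⟩ := BDFAux.main t ht.1
  exact ⟨c, C, 1/2, hc, hC, by norm_num, h⟩
end

section
/- Let κ be a BDF on T^d with depth D. If x1 and x2 are chosen independently and uniformly at random in the κ-ball of radius ε, then liminf_{ε→0} P[κ(x1 − x2) ≤ 2ε] > 0. -/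
/-!
Unfolding the tree, a BDF `κ` of depth `D` satisfies `κ(x) ≤ max_{i ∈ S} |x_i|` for some set `S`
of `D` coordinates, and the `κ`-ball of radius `c` is covered by finitely many, say `N`, boxes
`{max_{i ∈ S'} |x_i| < c}` with `|S'| ≥ D`. Writing `v` for the measure of the `ε`-ball of the
circle, the first fact puts the square of the `S`-box (measure `v^{2D}`) inside the set of
`ε`-close pairs, since differences of its points lie in the `S`-box of radius `2ε`; the second
gives `V_κ(ε) ≤ N v^D`. Hence the probability is at least `1 / N²` for every `ε > 0`.
-/

open MeasureTheory
open scoped ENNReal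

instance UnitAddCircle.isProbabilityMeasure_volume :
    IsProbabilityMeasure (volume : Measure UnitAddCircle) :=
  ⟨UnitAddCircle.measure_univ⟩

theorem volume_pi_finset_const {ι α : Type*} [Fintype ι] [MeasureSpace α]
    [IsProbabilityMeasure (volume : Measure α)] (S : Finset ι) (s : Set α) :
    volume ((S : Set ι).pi fun _ => s) = volume s ^ S.card := by
  rw [volume_pi, Measure.pi_pi_finset, Finset.prod_const]

namespace BDFTree

variable {d : ℕ}

def closePairs (t : BDFTree d) (ε : ℝ) :
    Set ((Fin d → AddCircle (1 : ℝ)) × (Fin d → AddCircle (1 : ℝ))) :=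
  {p | t.eval p.1 < ε ∧ t.eval p.2 < ε ∧ t.eval (p.1 - p.2) ≤ 2 * ε}

theorem exists_card_eq_depth_pi_ball_subset (t : BDFTree d) (ht : t.Proper) :
    ∃ S ⊆ t.leafSet, S.card = t.depth ∧ ∀ c : ℝ,
      ((S : Set (Fin d)).pi fun _ => Metric.ball 0 c) ⊆ {x | t.eval x < c} := by
  induction t with
  | leaf i =>
    refine ⟨{i}, subset_rfl, rfl, fun c x hx => ?_⟩
    simpa [eval] using hx i (Finset.mem_coe.mpr (Finset.mem_singleton_self i))
  | bmax t₁ t₂ ih₁ ih₂ =>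
    obtain ⟨hdisj, ht₁, ht₂⟩ := ht
    obtain ⟨S₁, hS₁, hcard₁, hsub₁⟩ := ih₁ ht₁
    obtain ⟨S₂, hS₂, hcard₂, hsub₂⟩ := ih₂ ht₂
    refine ⟨S₁ ∪ S₂, Finset.union_subset_union hS₁ hS₂, ?_, fun c x hx => ?_⟩
    · rw [Finset.card_union_of_disjoint (hdisj.mono hS₁ hS₂), hcard₁, hcard₂, depth]
    · rw [Finset.coe_union, Set.union_pi] at hx
      exact show max _ _ < c from max_lt (hsub₁ c hx.1) (hsub₂ c hx.2)
  | bmin t₁ t₂ ih₁ ih₂ =>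
    obtain ⟨-, ht₁, ht₂⟩ := ht
    obtain ⟨S₁, hS₁, hcard₁, hsub₁⟩ := ih₁ ht₁
    obtain ⟨S₂, hS₂, hcard₂, hsub₂⟩ := ih₂ ht₂
    rcases le_total t₁.depth t₂.depth with hle | hle
    · refine ⟨S₁, hS₁.trans Finset.subset_union_left, by rw [hcard₁, depth, min_eq_left hle],
        fun c x hx => show min _ _ < c from min_lt_of_left_lt (hsub₁ c hx)⟩
    · refine ⟨S₂, hS₂.trans Finset.subset_union_right, by rw [hcard₂, depth, min_eq_right hle],
        fun c x hx => show min _ _ < c from min_lt_of_right_lt (hsub₂ c hx)⟩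

theorem exists_subset_biUnion_pi_ball (t : BDFTree d) (ht : t.Proper) :
    ∃ 𝒮 : Finset (Finset (Fin d)), (∀ S ∈ 𝒮, S ⊆ t.leafSet ∧ t.depth ≤ S.card) ∧
      ∀ c : ℝ, {x | t.eval x < c} ⊆ ⋃ S ∈ 𝒮, (S : Set (Fin d)).pi fun _ => Metric.ball 0 c := by
  induction t with
  | leaf i =>
    refine ⟨{{i}}, by simp [leafSet, depth], fun c x hx => ?_⟩
    simpa [eval] using hx
  | bmax t₁ t₂ ih₁ ih₂ =>
    obtain ⟨hdisj, ht₁, ht₂⟩ := ht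
    obtain ⟨𝒮₁, h𝒮₁, hcover₁⟩ := ih₁ ht₁
    obtain ⟨𝒮₂, h𝒮₂, hcover₂⟩ := ih₂ ht₂
    refine ⟨Finset.image₂ (· ∪ ·) 𝒮₁ 𝒮₂, ?_, fun c x hx => ?_⟩
    · simp only [Finset.mem_image₂]
      rintro _ ⟨S₁, hS₁, S₂, hS₂, rfl⟩
      obtain ⟨hl₁, hd₁⟩ := h𝒮₁ S₁ hS₁
      obtain ⟨hl₂, hd₂⟩ := h𝒮₂ S₂ hS₂
      refine ⟨Finset.union_subset_union hl₁ hl₂, ?_⟩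
      rw [Finset.card_union_of_disjoint (hdisj.mono hl₁ hl₂), depth]
      exact add_le_add hd₁ hd₂
    · obtain ⟨hx₁, hx₂⟩ := max_lt_iff.mp (show max _ _ < c from hx)
      obtain ⟨S₁, hS₁, hxS₁⟩ := Set.mem_iUnion₂.mp (hcover₁ c hx₁)
      obtain ⟨S₂, hS₂, hxS₂⟩ := Set.mem_iUnion₂.mp (hcover₂ c hx₂)
      refine Set.mem_iUnion₂.mpr ⟨S₁ ∪ S₂, Finset.mem_image₂_of_mem hS₁ hS₂, ?_⟩
      rw [Finset.coe_union, Set.union_pi]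
      exact ⟨hxS₁, hxS₂⟩
  | bmin t₁ t₂ ih₁ ih₂ =>
    obtain ⟨-, ht₁, ht₂⟩ := ht
    obtain ⟨𝒮₁, h𝒮₁, hcover₁⟩ := ih₁ ht₁
    obtain ⟨𝒮₂, h𝒮₂, hcover₂⟩ := ih₂ ht₂
    refine ⟨𝒮₁ ∪ 𝒮₂, ?_, fun c x hx => ?_⟩
    · intro S hS
      rcases Finset.mem_union.mp hS with hS | hS
      · exact ⟨(h𝒮₁ S hS).1.trans Finset.subset_union_left,
          (min_le_left _ _).trans (h𝒮₁ S hS).2⟩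
      · exact ⟨(h𝒮₂ S hS).1.trans Finset.subset_union_right,
          (min_le_right _ _).trans (h𝒮₂ S hS).2⟩
    · rw [Finset.set_biUnion_union]
      rcases min_lt_iff.mp (show min _ _ < c from hx) with hx | hx
      exacts [Or.inl (hcover₁ c hx), Or.inr (hcover₂ c hx)]

theorem pow_volume_ball_sq_le_volume_closePairs (t : BDFTree d) (ht : t.Proper) (ε : ℝ) :
    (volume (Metric.ball (0 : AddCircle (1 : ℝ)) ε) ^ t.depth) ^ 2 ≤
      volume (t.closePairs ε) := by
  obtain ⟨S, -, hcard, hsub⟩ := exists_card_eq_depth_pi_ball_subset t ht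
  set Q := (S : Set (Fin d)).pi fun _ => Metric.ball (0 : AddCircle (1 : ℝ)) ε
  have hdiff : ∀ x ∈ Q, ∀ y ∈ Q,
      x - y ∈ (S : Set (Fin d)).pi fun _ => Metric.ball 0 (2 * ε) := by
    intro x hx y hy i hi
    rw [mem_ball_zero_iff, two_mul]
    exact (norm_sub_le _ _).trans_lt
      (add_lt_add (mem_ball_zero_iff.mp (hx i hi)) (mem_ball_zero_iff.mp (hy i hi)))
  have hQQ : Q ×ˢ Q ⊆ t.closePairs ε := fun p ⟨hp₁, hp₂⟩ =>
    ⟨hsub ε hp₁, hsub ε hp₂, (hsub (2 * ε) (hdiff _ hp₁ _ hp₂)).le⟩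
  calc (volume (Metric.ball (0 : AddCircle (1 : ℝ)) ε) ^ t.depth) ^ 2
      = volume (Q ×ˢ Q) := by
        rw [Measure.volume_eq_prod, Measure.prod_prod, volume_pi_finset_const, hcard, sq]
    _ ≤ volume (t.closePairs ε) := measure_mono hQQ

theorem exists_ballVol_le_mul_pow_volume_ball (t : BDFTree d) (ht : t.Proper) :
    ∃ N : ℕ, ∀ ε : ℝ,
      t.ballVol ε ≤ N * volume (Metric.ball (0 : AddCircle (1 : ℝ)) ε) ^ t.depth := by
  obtain ⟨𝒮, h𝒮, hcover⟩ := exists_subset_biUnion_pi_ball t ht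
  refine ⟨𝒮.card, fun ε => ?_⟩
  set v := volume (Metric.ball (0 : AddCircle (1 : ℝ)) ε)
  calc t.ballVol ε
      ≤ ∑ S ∈ 𝒮, volume ((S : Set (Fin d)).pi fun _ => Metric.ball (0 : AddCircle (1 : ℝ)) ε) :=
        (measure_mono (hcover ε)).trans (measure_biUnion_finset_le _ _)
    _ ≤ ∑ _S ∈ 𝒮, v ^ t.depth := Finset.sum_le_sum fun S hS => by
        rw [volume_pi_finset_const]
        exact pow_le_pow_right_of_le_one' prob_le_one (h𝒮 S hS).2
    _ = 𝒮.card * v ^ t.depth := by rw [Finset.sum_const, nsmul_eq_mul]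

end BDFTree

open Filter

/-- For two independent uniform points of the `ε`-ball, the probability that
their difference lies within distance `2ε` has positive liminf as `ε → 0`. -/
theorem bdf_liminf_prob_close_pos {d : ℕ} (t : BDFTree d) (ht : t.IsBDF) :
    0 < Filter.liminf (fun ε : ℝ =>
        volume {p : (Fin d → AddCircle (1 : ℝ)) × (Fin d → AddCircle (1 : ℝ)) |
            t.eval p.1 < ε ∧ t.eval p.2 < ε ∧ t.eval (p.1 - p.2) ≤ 2 * ε}
          / (t.ballVol ε * t.ballVol ε))
      (nhdsWithin 0 (Set.Ioi 0)) := by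
  obtain ⟨N, hN⟩ := t.exists_ballVol_le_mul_pow_volume_ball ht.1
  have hpos : (0 : ℝ≥0∞) < ((N : ℝ≥0∞) ^ 2)⁻¹ :=
    ENNReal.inv_pos.mpr (ENNReal.pow_ne_top (ENNReal.natCast_ne_top N))
  refine hpos.trans_le (le_liminf_of_le (by isBoundedDefault)
    (eventually_nhdsWithin_of_forall fun ε hε => ?_))
  set a := volume (Metric.ball (0 : AddCircle (1 : ℝ)) ε) ^ t.depth
  have ha₀ : a ^ 2 ≠ 0 := pow_ne_zero _ (pow_ne_zero _ (Metric.measure_ball_pos _ _ hε).ne')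
  have ha_top : a ^ 2 ≠ ⊤ := ENNReal.pow_ne_top (ENNReal.pow_ne_top (measure_ne_top _ _))
  calc ((N : ℝ≥0∞) ^ 2)⁻¹ = a ^ 2 / (N * a) ^ 2 := by
        rw [mul_pow, ← one_div, ← ENNReal.mul_div_mul_right 1 _ ha₀ ha_top, one_mul]
    _ ≤ _ := ENNReal.div_le_div (t.pow_volume_ball_sq_le_volume_closePairs ht.1 ε)
        (by rw [← sq]; exact pow_le_pow_left' (hN ε) 2)
end
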